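/- Let L be an orthomodular lattice and σ a Boolean pre-state on L. Define s_σ : L → L by s_σ(x) = 1 if σ(x)=1 and s_σ(x) = 0 if σ(x)=0. Then (L, s_σ) is an IE_B-lattice, and s_σ is coherent with σ (σ(x)=1 iff σ(s_σ(x))=1). -/
import Mathlib


/-- An orthomodular lattice: a bounded lattice with an involution `compl`
satisfying De Morgan, `x ⊓ ¬x = ⊥` and the orthomodular law. -/
class OML (L : Type*) extends Lattice L, BoundedOrder L where
  compl : L → L
  compl_compl : ∀ x : L, compl (compl x) = x
  compl_sup : ∀ x y : L, compl (x ⊔ y) = compl x ⊓ compl y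
  inf_compl : ∀ x : L, x ⊓ compl x = ⊥
  orthomodular : ∀ x y : L, x ⊔ (compl x ⊓ (x ⊔ y)) = x ⊔ y

/-- A Boolean pre-state: a `{0,1}`-valued, order preserving map with
`σ(¬x) = 1 - σ(x)`. -/
def IsBooleanPreState {L : Type*} [OML L] (σ : L → ℤ) : Prop :=
  (∀ x : L, σ x = 0 ∨ σ x = 1) ∧
  (∀ x : L, σ (OML.compl x) = 1 - σ x) ∧
  (∀ x y : L, x ≤ y → σ x ≤ σ y)

/-- The internal operation induced by a Boolean pre-state. -/
def inducedS {L : Type*} [OML L] (σ : L → ℤ) : L → L :=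
  fun x => if σ x = 1 then (⊤ : L) else (⊥ : L)

lemma OML.compl_top {L : Type*} [OML L] : OML.compl (⊤ : L) = ⊥ := by
  have := OML.inf_compl (⊤ : L); simpa using this

lemma OML.compl_bot {L : Type*} [OML L] : OML.compl (⊥ : L) = ⊤ := by
  have := OML.compl_compl (⊤ : L)
  rw [OML.compl_top] at this; exact this

theorem induced_is_IEB {L : Type*} [OML L] (σ : L → ℤ)
    (h : IsBooleanPreState σ) :
    let s := inducedS σ
    s (⊤ : L) = ⊤ ∧
    (∀ x : L, s (OML.compl x) = OML.compl (s x)) ∧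
    (∀ x y : L, s (x ⊔ s y) = s x ⊔ s y) ∧
    (∀ x y : L, y = (y ⊓ s x) ⊔ (y ⊓ OML.compl (s x))) ∧
    (∀ x y : L, s (x ⊓ y) ≤ s x ⊓ s y) ∧
    (∀ x : L, σ x = 1 ↔ σ (s x) = 1) := by
  obtain ⟨h01, hc, hmono⟩ := h
  have hbot : σ (⊥ : L) = 0 := by
    rcases h01 (⊥ : L) with h0 | h1
    · exact h0
    · have h2 : σ (⊤ : L) = 0 := by
        have := hc (⊥ : L); rw [OML.compl_bot] at this; omega
      have := hmono ⊥ ⊤ le_top; omega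
  have htop : σ (⊤ : L) = 1 := by
    have := hc (⊥ : L); rw [OML.compl_bot] at this; omega
  intro s
  have hs : ∀ x : L, s x = if σ x = 1 then (⊤ : L) else (⊥ : L) := fun _ => rfl
  refine ⟨by simp [hs, htop], ?_, ?_, ?_, ?_, ?_⟩
  · intro x
    rcases h01 x with h0 | h1
    · have : σ (OML.compl x) = 1 := by rw [hc]; omega
      simp [hs, this, h0, OML.compl_bot]
    · have : σ (OML.compl x) = 0 := by rw [hc]; omega
      simp [hs, this, h1, OML.compl_top]
  · intro x y
    rcases h01 y with h0 | h1
    · have : s y = ⊥ := by simp [hs, h0]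
      simp [this]
    · have : s y = ⊤ := by simp [hs, h1]
      simp [this, hs, htop]
  · intro x y
    rcases h01 x with h0 | h1
    · have : s x = ⊥ := by simp [hs, h0]
      simp [this, OML.compl_bot]
    · have : s x = ⊤ := by simp [hs, h1]
      simp [this, OML.compl_top]
  · intro x y
    rcases h01 (x ⊓ y) with h0 | h1
    · have : s (x ⊓ y) = ⊥ := by simp [hs, h0]
      simp [this]
    · have hx : σ x = 1 := by
        have := hmono (x ⊓ y) x inf_le_left
        rcases h01 x with h' | h' <;> omega
      have hy : σ y = 1 := by
        have := hmono (x ⊓ y) y inf_le_right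
        rcases h01 y with h' | h' <;> omega
      simp [hs, h1, hx, hy]
  · intro x
    rcases h01 x with h0 | h1
    · simp [hs, h0, hbot]
    · simp [hs, h1, htop]
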